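/- arXiv:2405.19037 — 4 statements merged into one kernel-verified Lean document; each statement's English description precedes it below -/
import Mathlib

section
/- Let A and A' be non-interactive proto-algorithms, let R ⊆ S_A × S_{A'} be an algorithmic simulation of A by A', and let χ: D_in → D'_in be such that for every input value d_in, the pair of initial states ((d_in,(⊥,⊥),⊥), (χ(d_in),(⊥,⊥),⊥)) is in R. Then for every input d_in and every algorithmic run σ of A on d_in, there exists an algorithmic run σ' of A' on χ(d_in) such that for all n ≥ 1, (σ[n], σ'[n]) ∈ R. -/
/-! Non-interactive proto-algorithms (Middelburg). -/

structure NIProto where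
  F : Type
  P : Type
  ini : F
  fin : F
  V : Type
  E : V → V → Prop
  vlabel : V → F ⊕ P
  elabel : V → V → Option Bool
  root : V
  D : Type
  Din : Type
  Dout : Type
  Iini : Din → D
  Ifin : D → Dout
  Ifun : F → D → D
  Ipred : P → D → Bool

namespace NIProto

/-- Well-formedness: the conditions on a non-interactive alphabet and
a non-interactive Σ-algorithm graph. -/
def WF (A : NIProto) : Prop :=
  Finite A.V ∧ Countable A.F ∧ Countable A.P ∧ A.ini ≠ A.fin ∧
  (∀ v, (∀ w, ¬ A.E w v) ↔ v = A.root) ∧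
  (∀ v, A.vlabel v = Sum.inl A.ini ↔ v = A.root) ∧
  (∀ v, A.vlabel v = Sum.inl A.fin ↔ ∀ w, ¬ A.E v w) ∧
  (∀ v w, A.E v w → (A.vlabel v).isLeft = true → A.elabel v w = none) ∧
  (∀ v p, A.vlabel v = Sum.inr p → ∃ v0 v1, v0 ≠ v1 ∧ A.E v v0 ∧ A.E v v1 ∧
      A.elabel v v0 = some false ∧ A.elabel v v1 = some true ∧
      ∀ w, A.E v w → w = v0 ∨ w = v1) ∧
  (∀ (l : List A.V) (h : l ≠ []), l.Nodup → l.Chain' A.E →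
      A.E (l.getLast h) (l.head h) → ∃ v ∈ l, (A.vlabel v).isLeft = true)

inductive State (A : NIProto) where
  | initial : A.Din → State A
  | internal : A.V → A.D → State A
  | final : A.Dout → State A

def State.isInitial {A : NIProto} : State A → Bool
  | .initial _ => true
  | _ => false

def State.isInternal {A : NIProto} : State A → Bool
  | .internal _ _ => true
  | _ => false

def State.isFinal {A : NIProto} : State A → Bool
  | .final _ => true
  | _ => false

def State.outVal {A : NIProto} : State A → Option A.Dout
  | .final dout => some dout
  | _ => none

/-- The algorithmic step function (as a relation). -/
inductive Step (A : NIProto) : State A → State A → Prop where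
  | start (din : A.Din) (v' : A.V) : A.E A.root v' →
      Step A (.initial din) (.internal v' (A.Iini din))
  | fn (v : A.V) (d : A.D) (f : A.F) (v' : A.V) :
      A.vlabel v = Sum.inl f → f ≠ A.fin → A.E v v' →
      Step A (.internal v d) (.internal v' (A.Ifun f d))
  | pred (v : A.V) (d : A.D) (p : A.P) (v' : A.V) :
      A.vlabel v = Sum.inr p → A.E v v' → A.elabel v v' = some (A.Ipred p d) →
      Step A (.internal v d) (.internal v' d)
  | toFinal (v : A.V) (d : A.D) :
      A.vlabel v = Sum.inl A.fin →
      Step A (.internal v d) (.final (A.Ifin d))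
  | stay (dout : A.Dout) : Step A (.final dout) (.final dout)

/-- The computational step function: like `Step` but concealing steps through
predicate-labeled vertices. -/
inductive CStep (A : NIProto) : State A → State A → Prop where
  | start (din : A.Din) (v' : A.V) : A.E A.root v' →
      CStep A (.initial din) (.internal v' (A.Iini din))
  | fn (v : A.V) (d : A.D) (f : A.F) (v' : A.V) :
      A.vlabel v = Sum.inl f → f ≠ A.fin → A.E v v' →
      CStep A (.internal v d) (.internal v' (A.Ifun f d))
  | pred (v : A.V) (d : A.D) (p : A.P) (v' : A.V) (t : State A) :
      A.vlabel v = Sum.inr p → A.E v v' → A.elabel v v' = some (A.Ipred p d) →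
      CStep A (.internal v' d) t →
      CStep A (.internal v d) t
  | toFinal (v : A.V) (d : A.D) :
      A.vlabel v = Sum.inl A.fin →
      CStep A (.internal v d) (.final (A.Ifin d))
  | stay (dout : A.Dout) : CStep A (.final dout) (.final dout)

/-- `A` is deterministic: every vertex labeled by a function symbol other than
`fin` has outdegree 1. -/
def Deterministic (A : NIProto) : Prop :=
  ∀ v f, A.vlabel v = Sum.inl f → f ≠ A.fin → ∃! w, A.E v w

/-- An algorithmic run of `A` on input `din`, represented as an infinite
sequence; finite runs end in a final state, which is then repeated forever
(so `σ n` is the `(n+1)`-st element of the run, clamped to the last one). -/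
def IsRunOn (A : NIProto) (din : A.Din) (σ : ℕ → State A) : Prop :=
  σ 0 = State.initial din ∧ ∀ n, Step A (σ n) (σ (n + 1))

/-- A run is divergent if some suffix consists entirely of internal states,
and convergent otherwise. -/
def Convergent {A : NIProto} (σ : ℕ → State A) : Prop :=
  ¬ ∃ N, ∀ n, N ≤ n → (σ n).isInternal = true

open Classical in
/-- The output value produced by a (convergent) run. -/
noncomputable def outputOf {A : NIProto} (σ : ℕ → State A) : Option A.Dout :=
  if h : ∃ n, (σ n).isFinal = true then (σ (Nat.find h)).outVal else none

open Classical in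
/-- The length of a run (number of states until, and including, the final
state; `⊤` for runs that never reach a final state). -/
noncomputable def runLen {A : NIProto} (σ : ℕ → State A) : ℕ∞ :=
  if h : ∃ n, (σ n).isFinal = true then ((Nat.find h + 1 : ℕ) : ℕ∞) else ⊤

/-- The relation computed by `A`. -/
def Computes (A : NIProto) (din : A.Din) (dout : A.Dout) : Prop :=
  ∃ σ : ℕ → State A, IsRunOn A din σ ∧ Convergent σ ∧ outputOf σ = some dout

/-- `R` is an algorithmic simulation of `A` by `A'`. -/
def IsAlgSim (A A' : NIProto) (R : State A → State A' → Prop) : Prop :=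
  (∀ s : State A, s.isInitial = true → ∃ s' : State A', s'.isInitial = true ∧ R s s') ∧
  (∀ s' : State A', s'.isFinal = true → ∃ s : State A, s.isFinal = true ∧ R s s') ∧
  (∀ s s' t, R s s' → Step A s t → ∃ t', Step A' s' t' ∧ R t t') ∧
  (∀ s s', R s s' →
    (s.isInitial = true ↔ s'.isInitial = true) ∧ (s.isFinal = true ↔ s'.isFinal = true))

/-- `R` is a computational simulation of `A` by `A'`. -/
def IsCompSim (A A' : NIProto) (R : State A → State A' → Prop) : Prop :=
  (∀ s : State A, s.isInitial = true → ∃ s' : State A', s'.isInitial = true ∧ R s s') ∧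
  (∀ s' : State A', s'.isFinal = true → ∃ s : State A, s.isFinal = true ∧ R s s') ∧
  (∀ s s' t, R s s' → CStep A s t → ∃ t', CStep A' s' t' ∧ R t t') ∧
  (∀ s s', R s s' →
    (s.isInitial = true ↔ s'.isInitial = true) ∧ (s.isFinal = true ↔ s'.isFinal = true))

def AlgSimulatedBy (A A' : NIProto) : Prop := ∃ R, IsAlgSim A A' R

def AlgEquiv (A A' : NIProto) : Prop :=
  ∃ R, IsAlgSim A A' R ∧ IsAlgSim A' A (fun s' s => R s s')

def CompEquiv (A A' : NIProto) : Prop :=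
  ∃ R, IsCompSim A A' R ∧ IsCompSim A' A (fun s' s => R s s')

end NIProto

/-- if `R` is an algorithmic simulation of `A` by `A'` that
relates the initial state on `din` to the initial state on `χ din`, then every
algorithmic run of `A` on `din` is matched, position by position, by an
algorithmic run of `A'` on `χ din`. -/
theorem stmt3 (A A' : NIProto) (hA : A.WF) (hA' : A'.WF)
    (R : NIProto.State A → NIProto.State A' → Prop)
    (hR : NIProto.IsAlgSim A A' R)
    (χ : A.Din → A'.Din)
    (hχ : ∀ din : A.Din, R (.initial din) (.initial (χ din))) :
    ∀ (din : A.Din) (σ : ℕ → NIProto.State A), NIProto.IsRunOn A din σ →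
      ∃ σ' : ℕ → NIProto.State A', NIProto.IsRunOn A' (χ din) σ' ∧
        ∀ n, R (σ n) (σ' n) := by
  intro din σ hσ
  obtain ⟨h0, hstep⟩ := hσ
  choose next hnext1 hnext2 using hR.2.2.1
  let f : ∀ n, {s' : NIProto.State A' // R (σ n) s'} := fun n =>
    Nat.rec ⟨.initial (χ din), by rw [h0]; exact hχ din⟩
      (fun n p => ⟨next (σ n) p.1 (σ (n+1)) p.2 (hstep n), hnext2 _ _ _ _ _⟩) n
  exact ⟨fun n => (f n).1, ⟨rfl, fun n => hnext1 _ _ _ _ _⟩, fun n => (f n).2⟩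
end

section
/- Every isomorphism of non-interactive proto-algorithms induces a bijection β between their state sets such that R = {(s, β(s))} is an algorithmic simulation of A by A' and R⁻¹ = {(s', β⁻¹(s'))} is an algorithmic simulation of A' by A. -/
/-- An isomorphism between non-interactive proto-algorithms. -/
structure NIIso (A A' : NIProto) where
  φF : A.F ≃ A'.F
  φP : A.P ≃ A'.P
  φV : A.V ≃ A'.V
  φD : A.D ≃ A'.D
  φI : A.Din ≃ A'.Din
  φO : A.Dout ≃ A'.Dout
  φB : Bool ≃ Bool
  edge_iff : ∀ v w, A.E v w ↔ A'.E (φV v) (φV w)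
  label_eq : ∀ v, A'.vlabel (φV v) = (A.vlabel v).map φF φP
  elabel_eq : ∀ v w, A'.elabel (φV v) (φV w) = (A.elabel v w).map φB
  map_root : φV A.root = A'.root
  map_ini : φF A.ini = A'.ini
  map_fin : φF A.fin = A'.fin
  comm_ini : ∀ din, A'.Iini (φI din) = φD (A.Iini din)
  comm_fin : ∀ d, A'.Ifin (φD d) = φO (A.Ifin d)
  comm_fun : ∀ f d, A'.Ifun (φF f) (φD d) = φD (A.Ifun f d)
  comm_pred : ∀ p d, A'.Ipred (φP p) (φD d) = φB (A.Ipred p d)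

/-- The map on states induced by an isomorphism. -/
def NIIso.stateMap {A A' : NIProto} (e : NIIso A A') :
    NIProto.State A → NIProto.State A'
  | .initial din => .initial (e.φI din)
  | .internal v d => .internal (e.φV v) (e.φD d)
  | .final dout => .final (e.φO dout)


namespace NIIso

variable {A A' : NIProto}

/-- The inverse isomorphism. -/
def symm (e : NIIso A A') : NIIso A' A where
  φF := e.φF.symm
  φP := e.φP.symm
  φV := e.φV.symm
  φD := e.φD.symm
  φI := e.φI.symm
  φO := e.φO.symm
  φB := e.φB.symm
  edge_iff := by
    intro v w
    have := e.edge_iff (e.φV.symm v) (e.φV.symm w)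
    simpa using this.symm
  label_eq := by
    intro v
    have := e.label_eq (e.φV.symm v)
    simp only [Equiv.apply_symm_apply] at this
    rw [this, Sum.map_map]
    cases A.vlabel (e.φV.symm v) <;> simp
  elabel_eq := by
    intro v w
    have := e.elabel_eq (e.φV.symm v) (e.φV.symm w)
    simp only [Equiv.apply_symm_apply] at this
    rw [this, Option.map_map]
    cases A.elabel (e.φV.symm v) (e.φV.symm w) <;> simp
  map_root := by
    have := e.map_root; rw [← this]; simp
  map_ini := by have := e.map_ini; rw [← this]; simp
  map_fin := by have := e.map_fin; rw [← this]; simp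
  comm_ini := by
    intro din
    have := e.comm_ini (e.φI.symm din)
    simp only [Equiv.apply_symm_apply] at this
    rw [this]; simp
  comm_fin := by
    intro d
    have := e.comm_fin (e.φD.symm d)
    simp only [Equiv.apply_symm_apply] at this
    rw [this]; simp
  comm_fun := by
    intro f d
    have := e.comm_fun (e.φF.symm f) (e.φD.symm d)
    simp only [Equiv.apply_symm_apply] at this
    rw [this]; simp
  comm_pred := by
    intro p d
    have := e.comm_pred (e.φP.symm p) (e.φD.symm d)
    simp only [Equiv.apply_symm_apply] at this
    rw [this]; simp

theorem stateMap_symm_apply (e : NIIso A A') (s : NIProto.State A) :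
    e.symm.stateMap (e.stateMap s) = s := by
  cases s <;> simp [stateMap, symm]

theorem stateMap_apply_symm (e : NIIso A A') (s' : NIProto.State A') :
    e.stateMap (e.symm.stateMap s') = s' := by
  cases s' <;> simp [stateMap, symm]

theorem step_map (e : NIIso A A') {s t : NIProto.State A}
    (h : NIProto.Step A s t) :
    NIProto.Step A' (e.stateMap s) (e.stateMap t) := by
  cases h with
  | start din v' hE =>
      have hE' : A'.E A'.root (e.φV v') := by
        rw [← e.map_root]; exact (e.edge_iff _ _).mp hE
      have := NIProto.Step.start (A := A') (e.φI din) (e.φV v') hE'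
      simpa [stateMap, e.comm_ini] using this
  | fn v d f v' hl hf hE =>
      have hl' : A'.vlabel (e.φV v) = Sum.inl (e.φF f) := by
        rw [e.label_eq, hl]; rfl
      have hf' : e.φF f ≠ A'.fin := by
        rw [← e.map_fin]; exact fun h => hf (e.φF.injective h)
      have hE' := (e.edge_iff v v').mp hE
      have := NIProto.Step.fn (A := A') (e.φV v) (e.φD d) (e.φF f) (e.φV v') hl' hf' hE'
      simpa [stateMap, e.comm_fun] using this
  | pred v d p v' hl hE hel =>
      have hl' : A'.vlabel (e.φV v) = Sum.inr (e.φP p) := by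
        rw [e.label_eq, hl]; rfl
      have hE' := (e.edge_iff v v').mp hE
      have hel' : A'.elabel (e.φV v) (e.φV v') = some (A'.Ipred (e.φP p) (e.φD d)) := by
        rw [e.elabel_eq, hel, e.comm_pred]; rfl
      exact NIProto.Step.pred (e.φV v) (e.φD d) (e.φP p) (e.φV v') hl' hE' hel'
  | toFinal v d hl =>
      have hl' : A'.vlabel (e.φV v) = Sum.inl A'.fin := by
        rw [e.label_eq, hl, ← e.map_fin]; rfl
      have := NIProto.Step.toFinal (A := A') (e.φV v) (e.φD d) hl'
      simpa [stateMap, e.comm_fin] using this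
  | stay dout => exact NIProto.Step.stay _

theorem isInitial_map (e : NIIso A A') (s : NIProto.State A) :
    (e.stateMap s).isInitial = s.isInitial := by
  cases s <;> rfl

theorem isFinal_map (e : NIIso A A') (s : NIProto.State A) :
    (e.stateMap s).isFinal = s.isFinal := by
  cases s <;> rfl

end NIIso

/-- every isomorphism of non-interactive proto-algorithms induces
a bijection `β` between the state sets such that `{(s, β s)}` is an algorithmic
simulation of `A` by `A'` and its inverse is an algorithmic simulation of `A'`
by `A`. -/
theorem stmt7 (A A' : NIProto) (hA : A.WF) (hA' : A'.WF) (e : NIIso A A') :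
    Function.Bijective e.stateMap ∧
    NIProto.IsAlgSim A A' (fun s s' => s' = e.stateMap s) ∧
    NIProto.IsAlgSim A' A (fun s' s => s' = e.stateMap s) := by
  refine ⟨?_, ⟨?_, ?_, ?_, ?_⟩, ⟨?_, ?_, ?_, ?_⟩⟩
  · exact Function.bijective_iff_has_inverse.mpr
      ⟨e.symm.stateMap, e.stateMap_symm_apply, e.stateMap_apply_symm⟩
  · intro s hs
    exact ⟨e.stateMap s, by rw [e.isInitial_map]; exact hs, rfl⟩
  · intro s' hs'
    refine ⟨e.symm.stateMap s', ?_, (e.stateMap_apply_symm s').symm⟩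
    rw [e.symm.isFinal_map]; exact hs'
  · rintro s s' t rfl hst
    exact ⟨e.stateMap t, e.step_map hst, rfl⟩
  · rintro s s' rfl
    rw [e.isInitial_map, e.isFinal_map]
    exact ⟨Iff.rfl, Iff.rfl⟩
  · intro s' hs'
    refine ⟨e.symm.stateMap s', ?_, (e.stateMap_apply_symm s').symm⟩
    rw [e.symm.isInitial_map]; exact hs'
  · intro s hs
    exact ⟨e.stateMap s, by rw [e.isFinal_map]; exact hs, rfl⟩
  · rintro s' s t' h hst'
    refine ⟨e.symm.stateMap t', ?_, (e.stateMap_apply_symm t').symm⟩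
    have := e.symm.step_map hst'
    rwa [h, e.stateMap_symm_apply] at this
  · rintro s' s rfl
    rw [e.isInitial_map, e.isFinal_map]
    exact ⟨Iff.rfl, Iff.rfl⟩
end

section
/- Let A and A' be interactive proto-algorithms, R an algorithmic simulation of A by A', and χ: D_in → D'_in such that for all d_in, ((d_in,(⊥,⊥),⊥),(χ(d_in),(⊥,⊥),⊥)) ∈ R. Then for every input sequence δ ∈ D_in^∞ and every algorithmic run σ of A on δ, there exists an algorithmic run σ' of A' on χ^∞(δ) (the pointwise image of δ under χ) such that for all n ≥ 1, (σ[n], σ'[n]) ∈ R. -/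
/-! Interactive proto-algorithms (Middelburg). -/

structure IProto where
  F : Type
  P : Type
  ini : F
  fin : F
  inp : F
  outp : F
  V : Type
  E : V → V → Prop
  vlabel : V → F ⊕ P
  elabel : V → V → Option Bool
  root : V
  D : Type
  Din : Type
  Dout : Type
  Iini : Din → D
  Ifin : D → Dout
  Iinp : D → Din → D
  Ioutp : D → Dout
  Ifun : F → D → D
  Ipred : P → D → Bool

namespace IProto

/-- Well-formedness: the conditions on an interactive alphabet and an
interactive Σ-algorithm graph. -/
def WF (A : IProto) : Prop :=
  Finite A.V ∧ Countable A.F ∧ Countable A.P ∧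
  A.ini ≠ A.fin ∧ A.ini ≠ A.inp ∧ A.ini ≠ A.outp ∧
  A.fin ≠ A.inp ∧ A.fin ≠ A.outp ∧ A.inp ≠ A.outp ∧
  (∀ v, (∀ w, ¬ A.E w v) ↔ v = A.root) ∧
  (∀ v, A.vlabel v = Sum.inl A.ini ↔ v = A.root) ∧
  (∀ v, A.vlabel v = Sum.inl A.fin ↔ ∀ w, ¬ A.E v w) ∧
  (∀ v, A.vlabel v = Sum.inl A.outp → ∃! w, A.E v w) ∧
  (∀ v w, A.E v w → (A.vlabel v).isLeft = true → A.elabel v w = none) ∧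
  (∀ v p, A.vlabel v = Sum.inr p → ∃ v0 v1, v0 ≠ v1 ∧ A.E v v0 ∧ A.E v v1 ∧
      A.elabel v v0 = some false ∧ A.elabel v v1 = some true ∧
      ∀ w, A.E v w → w = v0 ∨ w = v1) ∧
  (∀ v w, A.E v w → (A.vlabel v = Sum.inl A.outp ↔ A.vlabel w = Sum.inl A.inp)) ∧
  (∀ (l : List A.V) (h : l ≠ []), l.Nodup → l.Chain' A.E →
      A.E (l.getLast h) (l.head h) → ∃ v ∈ l, (A.vlabel v).isLeft = true)

inductive State (A : IProto) where
  | initial : A.Din → State A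
  | internal : A.V → A.D → State A
  | interact : A.Din → A.V → A.D → A.Dout → State A
  | final : A.Dout → State A

def State.isInitial {A : IProto} : State A → Bool
  | .initial _ => true
  | _ => false

def State.isInternal {A : IProto} : State A → Bool
  | .internal _ _ => true
  | _ => false

def State.isInteract {A : IProto} : State A → Bool
  | .interact _ _ _ _ => true
  | _ => false

def State.isFinal {A : IProto} : State A → Bool
  | .final _ => true
  | _ => false

/-- The input value component of a state (`⊥` rendered as `none`). -/
def State.inVal {A : IProto} : State A → Option A.Din
  | .initial din => some din
  | .interact din _ _ _ => some din
  | _ => none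

/-- The output value component of a state (`⊥` rendered as `none`). -/
def State.outVal {A : IProto} : State A → Option A.Dout
  | .interact _ _ _ dout => some dout
  | .final dout => some dout
  | _ => none

/-- The algorithmic step function (as a relation). -/
inductive Step (A : IProto) : State A → State A → Prop where
  | start (din : A.Din) (v' : A.V) : A.E A.root v' →
      Step A (.initial din) (.internal v' (A.Iini din))
  | fn (v : A.V) (d : A.D) (f : A.F) (v' : A.V) :
      A.vlabel v = Sum.inl f → f ≠ A.fin → f ≠ A.inp → f ≠ A.outp → A.E v v' →
      Step A (.internal v d) (.internal v' (A.Ifun f d))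
  | pred (v : A.V) (d : A.D) (p : A.P) (v' : A.V) :
      A.vlabel v = Sum.inr p → A.E v v' → A.elabel v v' = some (A.Ipred p d) →
      Step A (.internal v d) (.internal v' d)
  | out (v : A.V) (d : A.D) (v' : A.V) (din : A.Din) :
      A.vlabel v = Sum.inl A.outp → A.E v v' →
      Step A (.internal v d) (.interact din v' d (A.Ioutp d))
  | inp (din : A.Din) (v : A.V) (d : A.D) (dout : A.Dout) (v' : A.V) :
      A.vlabel v = Sum.inl A.inp → A.E v v' →
      Step A (.interact din v d dout) (.internal v' (A.Iinp d din))
  | toFinal (v : A.V) (d : A.D) :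
      A.vlabel v = Sum.inl A.fin →
      Step A (.internal v d) (.final (A.Ifin d))
  | stay (dout : A.Dout) : Step A (.final dout) (.final dout)

/-- The computational step function: like `Step` but concealing steps through
predicate-labeled vertices. -/
inductive CStep (A : IProto) : State A → State A → Prop where
  | start (din : A.Din) (v' : A.V) : A.E A.root v' →
      CStep A (.initial din) (.internal v' (A.Iini din))
  | fn (v : A.V) (d : A.D) (f : A.F) (v' : A.V) :
      A.vlabel v = Sum.inl f → f ≠ A.fin → f ≠ A.inp → f ≠ A.outp → A.E v v' →
      CStep A (.internal v d) (.internal v' (A.Ifun f d))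
  | pred (v : A.V) (d : A.D) (p : A.P) (v' : A.V) (t : State A) :
      A.vlabel v = Sum.inr p → A.E v v' → A.elabel v v' = some (A.Ipred p d) →
      CStep A (.internal v' d) t →
      CStep A (.internal v d) t
  | out (v : A.V) (d : A.D) (v' : A.V) (din : A.Din) :
      A.vlabel v = Sum.inl A.outp → A.E v v' →
      CStep A (.internal v d) (.interact din v' d (A.Ioutp d))
  | inp (din : A.Din) (v : A.V) (d : A.D) (dout : A.Dout) (v' : A.V) :
      A.vlabel v = Sum.inl A.inp → A.E v v' →
      CStep A (.interact din v d dout) (.internal v' (A.Iinp d din))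
  | toFinal (v : A.V) (d : A.D) :
      A.vlabel v = Sum.inl A.fin →
      CStep A (.internal v d) (.final (A.Ifin d))
  | stay (dout : A.Dout) : CStep A (.final dout) (.final dout)

/-- `A` is deterministic: every vertex labeled by a function symbol other than
`fin` has outdegree 1. -/
def Deterministic (A : IProto) : Prop :=
  ∀ v f, A.vlabel v = Sum.inl f → f ≠ A.fin → ∃! w, A.E v w

/-- A possibly infinite nonempty sequence over `α`, as a prefix-closed partial
function. -/
def ValidSeq {α : Type} (δ : ℕ → Option α) : Prop :=
  (δ 0).isSome = true ∧ ∀ n, δ n = none → δ (n + 1) = none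

/-- Number of positions `< n` at which the run consumes an input value. -/
def inCnt {A : IProto} (σ : ℕ → State A) : ℕ → ℕ
  | 0 => 0
  | n + 1 => inCnt σ n + if ((σ n).inVal).isSome then 1 else 0

open Classical in
/-- The stream of input values consumed by a run. -/
noncomputable def inSeq {A : IProto} (σ : ℕ → State A) (k : ℕ) : Option A.Din :=
  if h : ∃ n, ((σ n).inVal).isSome = true ∧ inCnt σ n = k then
    (σ (Nat.find h)).inVal
  else none

/-- Positions at which the run produces an output value (a repeated final
state, used as padding of a finite run, is counted only once). -/
def outPos {A : IProto} (σ : ℕ → State A) : ℕ → Bool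
  | 0 => ((σ 0).outVal).isSome
  | n + 1 => (σ (n + 1)).isInteract || ((σ (n + 1)).isFinal && !(σ n).isFinal)

/-- Number of positions `< n` at which the run produces an output value. -/
def outCnt {A : IProto} (σ : ℕ → State A) : ℕ → ℕ
  | 0 => 0
  | n + 1 => outCnt σ n + if outPos σ n then 1 else 0

open Classical in
/-- The stream of output values produced by a run. -/
noncomputable def outSeq {A : IProto} (σ : ℕ → State A) (k : ℕ) : Option A.Dout :=
  if h : ∃ n, outPos σ n = true ∧ outCnt σ n = k then
    (σ (Nat.find h)).outVal
  else none

/-- An algorithmic run of `A` on the input value sequence `δ`, represented as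
an infinite sequence of states; finite runs end in a final state, which is then
repeated forever (so `σ n` is the `(n+1)`-st element of the run, clamped to the
last one). -/
def IsRunOn (A : IProto) (δ : ℕ → Option A.Din) (σ : ℕ → State A) : Prop :=
  (σ 0).isInitial = true ∧ (∀ n, Step A (σ n) (σ (n + 1))) ∧ inSeq σ = δ

/-- A run is divergent if some suffix consists entirely of internal states,
and convergent otherwise. -/
def Convergent {A : IProto} (σ : ℕ → State A) : Prop :=
  ¬ ∃ N, ∀ n, N ≤ n → (σ n).isInternal = true

open Classical in
/-- The length of a run (`⊤` for runs that never reach a final state). -/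
noncomputable def runLen {A : IProto} (σ : ℕ → State A) : ℕ∞ :=
  if h : ∃ n, (σ n).isFinal = true then ((Nat.find h + 1 : ℕ) : ℕ∞) else ⊤

/-- The relation computed by `A`, relating input value sequences to output
value sequences. -/
def Computes (A : IProto) (δ : ℕ → Option A.Din) (ε : ℕ → Option A.Dout) : Prop :=
  ∃ σ : ℕ → State A, IsRunOn A δ σ ∧ Convergent σ ∧ outSeq σ = ε

/-- `R` is an algorithmic simulation of `A` by `A'`. -/
def IsAlgSim (A A' : IProto) (R : State A → State A' → Prop) : Prop :=
  (∀ s : State A, s.isInitial = true → ∃ s' : State A', s'.isInitial = true ∧ R s s') ∧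
  (∀ s' : State A', s'.isFinal = true → ∃ s : State A, s.isFinal = true ∧ R s s') ∧
  (∀ s s' t, R s s' → Step A s t → ∃ t', Step A' s' t' ∧ R t t') ∧
  (∀ s s', R s s' →
    (s.isInitial = true ↔ s'.isInitial = true) ∧
    (s.isFinal = true ↔ s'.isFinal = true) ∧
    (s.isInternal = true ↔ s'.isInternal = true) ∧
    (s.isInteract = true ↔ s'.isInteract = true)) ∧
  (∃ (χ : A.Din → A'.Din) (ω : A'.Dout → A.Dout), ∀ s s', R s s' →
    ((s.inVal.isSome = true ∨ s'.inVal.isSome = true) →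
      ∃ din, s.inVal = some din ∧ s'.inVal = some (χ din)) ∧
    ((s.outVal.isSome = true ∨ s'.outVal.isSome = true) →
      ∃ dout', s'.outVal = some dout' ∧ s.outVal = some (ω dout')))

/-- `R` is a computational simulation of `A` by `A'`. -/
def IsCompSim (A A' : IProto) (R : State A → State A' → Prop) : Prop :=
  (∀ s : State A, s.isInitial = true → ∃ s' : State A', s'.isInitial = true ∧ R s s') ∧
  (∀ s' : State A', s'.isFinal = true → ∃ s : State A, s.isFinal = true ∧ R s s') ∧
  (∀ s s' t, R s s' → CStep A s t → ∃ t', CStep A' s' t' ∧ R t t') ∧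
  (∀ s s', R s s' →
    (s.isInitial = true ↔ s'.isInitial = true) ∧
    (s.isFinal = true ↔ s'.isFinal = true) ∧
    (s.isInternal = true ↔ s'.isInternal = true) ∧
    (s.isInteract = true ↔ s'.isInteract = true)) ∧
  (∃ (χ : A.Din → A'.Din) (ω : A'.Dout → A.Dout), ∀ s s', R s s' →
    ((s.inVal.isSome = true ∨ s'.inVal.isSome = true) →
      ∃ din, s.inVal = some din ∧ s'.inVal = some (χ din)) ∧
    ((s.outVal.isSome = true ∨ s'.outVal.isSome = true) →
      ∃ dout', s'.outVal = some dout' ∧ s.outVal = some (ω dout')))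

def AlgSimulatedBy (A A' : IProto) : Prop := ∃ R, IsAlgSim A A' R

def AlgEquiv (A A' : IProto) : Prop :=
  ∃ R, IsAlgSim A A' R ∧ IsAlgSim A' A (fun s' s => R s s')

def CompEquiv (A A' : IProto) : Prop :=
  ∃ R, IsCompSim A A' R ∧ IsCompSim A' A (fun s' s => R s s')

/-- `A` is a trivial interactive proto-algorithm: no vertex is labeled `inp`
or `outp`. -/
def Trivial (A : IProto) : Prop :=
  ∀ v, A.vlabel v ≠ Sum.inl A.inp ∧ A.vlabel v ≠ Sum.inl A.outp

end IProto

/-- if `R` is an algorithmic simulation of `A` by `A'` relating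
the initial state on `din` to the initial state on `χ din` (for each `din`),
then every algorithmic run of `A` on an input sequence `δ` is matched, position
by position, by an algorithmic run of `A'` on the pointwise image of `δ`
under `χ`. -/
theorem stmt12 (A A' : IProto) (hA : A.WF) (hA' : A'.WF)
    (R : IProto.State A → IProto.State A' → Prop)
    (hR : IProto.IsAlgSim A A' R)
    (χ : A.Din → A'.Din)
    (hχ : ∀ din : A.Din, R (.initial din) (.initial (χ din))) :
    ∀ (δ : ℕ → Option A.Din) (σ : ℕ → IProto.State A),
      IProto.ValidSeq δ → IProto.IsRunOn A δ σ →
      ∃ σ' : ℕ → IProto.State A',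
        IProto.IsRunOn A' (fun n => (δ n).map χ) σ' ∧ ∀ n, R (σ n) (σ' n) := by
  obtain ⟨hini, hfin, hstep, hkind, χ₀, ω, hval⟩ := hR
  intro δ σ hδvalid hrun
  obtain ⟨h0, hs, hseq⟩ := hrun
  obtain ⟨din0, hσ0⟩ : ∃ d, σ 0 = .initial d := by
    cases h : σ 0 <;> simp [h, IProto.State.isInitial] at h0 ⊢
  have key : ∀ n (t : IProto.State A'), R (σ n) t →
      ∃ t', IProto.Step A' t t' ∧ R (σ (n+1)) t' :=
    fun n t h => hstep _ _ _ h (hs n)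
  let g : ∀ n, {t : IProto.State A' // R (σ n) t} :=
    fun n => Nat.rec ⟨.initial (χ din0), by rw [hσ0]; exact hχ din0⟩
      (fun n p => ⟨Classical.choose (key n p.1 p.2),
        (Classical.choose_spec (key n p.1 p.2)).2⟩) n
  set σ' : ℕ → IProto.State A' := fun n => (g n).1 with hσ'
  have hχeq : ∀ d, χ₀ d = χ d := by
    intro d
    obtain ⟨din, h1, h2⟩ := (hval _ _ (hχ d)).1
      (Or.inl (by simp [IProto.State.inVal]))
    simp [IProto.State.inVal] at h1 h2
    rw [← h1] at h2; exact h2.symm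
  have hmap : ∀ n, (σ' n).inVal = ((σ n).inVal).map χ := by
    intro n
    have h := (hval _ _ (g n).2).1
    cases hv : (σ n).inVal with
    | some d =>
        obtain ⟨din, h1, h2⟩ := h (Or.inl (by simp [hv]))
        rw [hv] at h1
        injection h1 with e
        subst e
        simp [hσ', h2, hχeq]
    | none =>
        simp only [Option.map_none]
        by_contra hne
        obtain ⟨din, h1, h2⟩ := h (Or.inr (Option.ne_none_iff_isSome.mp hne))
        rw [hv] at h1
        exact absurd h1 (by simp)
  have hcnt : ∀ n, IProto.inCnt σ' n = IProto.inCnt σ n := by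
    intro n
    induction n with
    | zero => rfl
    | succ n ih => simp [IProto.inCnt, ih, hmap n, Option.isSome_map]
  have hiff : ∀ k n, (((σ' n).inVal).isSome = true ∧ IProto.inCnt σ' n = k) ↔
      (((σ n).inVal).isSome = true ∧ IProto.inCnt σ n = k) := by
    intro k n
    rw [hmap n, hcnt n]
    simp [Option.isSome_map]
  refine ⟨σ', ⟨rfl, fun n =>
    (Classical.choose_spec (key n (g n).1 (g n).2)).1, ?_⟩, fun n => (g n).2⟩
  funext k
  show IProto.inSeq σ' k = (δ k).map χ
  rw [← hseq]
  simp only [IProto.inSeq]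
  split_ifs with h1 h2 h2
  · have : Nat.find h1 = Nat.find h2 :=
      le_antisymm (Nat.find_mono fun n => (hiff k n).mpr)
        (Nat.find_mono fun n => (hiff k n).mp)
    rw [this, hmap]
  · exact absurd ⟨Nat.find h1, (hiff k _).mp (Nat.find_spec h1)⟩ h2
  · exact absurd ⟨Nat.find h2, (hiff k _).mpr (Nat.find_spec h2)⟩ h1
  · rfl
end

section
/- Let A and A' be interactive proto-algorithms with A algorithmically simulated by A'. Then there exist total functions χ: D_in → D'_in and ω: D'_out → D_out such that: (1) for all input sequences δ and output sequences ε, if (δ, ε) is in the relation computed by A then there exists ε' with (χ^∞(δ), ε') in the relation computed by A' and ω^∞(ε') = ε; and (2) for every finite input sequence δ and convergent algorithmic run σ of A on δ, there exists a convergent algorithmic run σ' of A' on χ^∞(δ) with ω^∞(outputs(σ')) = outputs(σ) and |σ| = |σ'|. -/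
private lemma myFindCongr {p q : ℕ → Prop} [DecidablePred p] [DecidablePred q]
    (h : ∀ n, p n ↔ q n) (hp : ∃ n, p n) (hq : ∃ n, q n) :
    Nat.find hp = Nat.find hq :=
  le_antisymm (Nat.find_le ((h _).mpr (Nat.find_spec hq)))
    (Nat.find_le ((h _).mp (Nat.find_spec hp)))

/-- if `A` is algorithmically simulated by `A'`, then there are
total functions `χ`, `ω` such that (1) the relation computed by `A'` models
the relation computed by `A` (via the pointwise extensions `χ^∞`, `ω^∞`), and
(2) every convergent algorithmic run of `A` on a finite input sequence is
matched by a convergent algorithmic run of `A'` of the same length with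
corresponding output stream. -/
theorem stmt13 (A A' : IProto) (hA : A.WF) (hA' : A'.WF)
    (hsim : IProto.AlgSimulatedBy A A') :
    ∃ (χ : A.Din → A'.Din) (ω : A'.Dout → A.Dout),
      (∀ (δ : ℕ → Option A.Din) (ε : ℕ → Option A.Dout),
        IProto.ValidSeq δ → IProto.Computes A δ ε →
        ∃ ε' : ℕ → Option A'.Dout,
          IProto.Computes A' (fun n => (δ n).map χ) ε' ∧
          ∀ k, (ε' k).map ω = ε k) ∧
      (∀ (δ : ℕ → Option A.Din) (σ : ℕ → IProto.State A),
        IProto.ValidSeq δ → (∃ n, δ n = none) →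
        IProto.IsRunOn A δ σ → IProto.Convergent σ →
        ∃ σ' : ℕ → IProto.State A',
          IProto.IsRunOn A' (fun n => (δ n).map χ) σ' ∧ IProto.Convergent σ' ∧
          (∀ k, (IProto.outSeq σ' k).map ω = IProto.outSeq σ k) ∧
          IProto.runLen σ' = IProto.runLen σ) := by
  classical
  obtain ⟨R, hinit, hfin, hstep, hker, χ, ω, hio⟩ := hsim
  -- pointwise facts
  have kindeq : ∀ s s', R s s' →
      s'.isInitial = s.isInitial ∧ s'.isFinal = s.isFinal ∧
      s'.isInternal = s.isInternal ∧ s'.isInteract = s.isInteract := by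
    intro s s' h
    obtain ⟨h1, h2, h3, h4⟩ := hker s s' h
    exact ⟨Bool.eq_iff_iff.mpr h1.symm, Bool.eq_iff_iff.mpr h2.symm,
      Bool.eq_iff_iff.mpr h3.symm, Bool.eq_iff_iff.mpr h4.symm⟩
  have mapsome : ∀ {α β : Type} (f : α → β) (o : Option α),
      (o.map f).isSome = o.isSome := fun f o => by cases o <;> rfl
  have invaleq : ∀ s s', R s s' → s'.inVal = (s.inVal).map χ := by
    intro s s' h
    obtain ⟨h1, -⟩ := hio s s' h
    cases hs : s.inVal with
    | none =>
      cases hs' : s'.inVal with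
      | none => rfl
      | some d =>
        obtain ⟨din, hd1, hd2⟩ := h1 (Or.inr (by simp [hs']))
        rw [hs] at hd1; exact absurd hd1 (by simp)
    | some d =>
      obtain ⟨din, hd1, hd2⟩ := h1 (Or.inl (by simp [hs]))
      rw [hs] at hd1
      simp only [Option.some.injEq] at hd1
      simp [hd2, hd1]
  have outvaleq : ∀ s s', R s s' → (s'.outVal).map ω = s.outVal := by
    intro s s' h
    obtain ⟨-, h2⟩ := hio s s' h
    cases hs' : s'.outVal with
    | none =>
      cases hs : s.outVal with
      | none => rfl
      | some d =>
        obtain ⟨d', hd1, hd2⟩ := h2 (Or.inl (by simp [hs]))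
        rw [hs'] at hd1; exact absurd hd1 (by simp)
    | some d =>
      obtain ⟨d', hd1, hd2⟩ := h2 (Or.inr (by simp [hs']))
      rw [hs'] at hd1
      simp only [Option.some.injEq] at hd1
      simp [hd2, hd1]
  choose init' hinit1 hinit2 using hinit
  choose Fstep hF1 hF2 using hstep
  -- the key run-construction
  have key : ∀ (δ : ℕ → Option A.Din) (σ : ℕ → IProto.State A),
      IProto.IsRunOn A δ σ →
      ∃ σ' : ℕ → IProto.State A',
        IProto.IsRunOn A' (fun n => (δ n).map χ) σ' ∧
        (∀ n, (σ' n).isInternal = (σ n).isInternal) ∧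
        (∀ k, (IProto.outSeq σ' k).map ω = IProto.outSeq σ k) ∧
        IProto.runLen σ' = IProto.runLen σ := by
    intro δ σ ⟨h0, hs, hin⟩
    let g : ∀ n : ℕ, {x : IProto.State A' // R (σ n) x} := fun n =>
      Nat.rec ⟨init' (σ 0) h0, hinit2 _ h0⟩
        (fun n p => ⟨Fstep (σ n) p.1 (σ (n + 1)) p.2 (hs n),
          hF2 _ _ _ p.2 (hs n)⟩) n
    refine ⟨fun n => (g n).1, ?_⟩
    have hR : ∀ n, R (σ n) ((g n).1) := fun n => (g n).2
    have hkind := fun n => kindeq _ _ (hR n)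
    have hiv : ∀ n, ((g n).1).inVal = ((σ n).inVal).map χ :=
      fun n => invaleq _ _ (hR n)
    have hov : ∀ n, (((g n).1).outVal).map ω = (σ n).outVal :=
      fun n => outvaleq _ _ (hR n)
    have hovs : ∀ n, (((g n).1).outVal).isSome = ((σ n).outVal).isSome := by
      intro n; rw [← hov n, mapsome]
    -- input sequences
    have hic : ∀ n, IProto.inCnt (fun n => (g n).1) n = IProto.inCnt σ n := by
      intro n
      induction n with
      | zero => rfl
      | succ n ih =>
        simp only [IProto.inCnt, ih, hiv n, mapsome]
    have hinseq : ∀ k, IProto.inSeq (fun n => (g n).1) k =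
        (IProto.inSeq σ k).map χ := by
      intro k
      unfold IProto.inSeq
      have hpred : ∀ n, ((((g n).1).inVal).isSome = true ∧
          IProto.inCnt (fun n => (g n).1) n = k) ↔
          (((σ n).inVal).isSome = true ∧ IProto.inCnt σ n = k) := by
        intro n; rw [hic n, hiv n, mapsome]
      by_cases h : ∃ n, ((σ n).inVal).isSome = true ∧ IProto.inCnt σ n = k
      · have h' : ∃ n, (((g n).1).inVal).isSome = true ∧
            IProto.inCnt (fun n => (g n).1) n = k := by
          obtain ⟨n, hn⟩ := h; exact ⟨n, (hpred n).mpr hn⟩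
        rw [dif_pos h', dif_pos h, myFindCongr hpred h' h, hiv]
      · have h' : ¬ ∃ n, (((g n).1).inVal).isSome = true ∧
            IProto.inCnt (fun n => (g n).1) n = k := by
          intro ⟨n, hn⟩; exact h ⟨n, (hpred n).mp hn⟩
        rw [dif_neg h', dif_neg h]; rfl
    -- output sequences
    have hop : ∀ n, IProto.outPos (fun n => (g n).1) n = IProto.outPos σ n := by
      intro n
      cases n with
      | zero => simp only [IProto.outPos, hovs 0]
      | succ n =>
        simp only [IProto.outPos, (hkind (n + 1)).2.1, (hkind (n + 1)).2.2.2,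
          (hkind n).2.1]
    have hoc : ∀ n, IProto.outCnt (fun n => (g n).1) n = IProto.outCnt σ n := by
      intro n
      induction n with
      | zero => rfl
      | succ n ih => simp only [IProto.outCnt, ih, hop n]
    have houtseq : ∀ k, (IProto.outSeq (fun n => (g n).1) k).map ω =
        IProto.outSeq σ k := by
      intro k
      unfold IProto.outSeq
      have hpred : ∀ n, (IProto.outPos (fun n => (g n).1) n = true ∧
          IProto.outCnt (fun n => (g n).1) n = k) ↔
          (IProto.outPos σ n = true ∧ IProto.outCnt σ n = k) := by
        intro n; rw [hoc n, hop n]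
      by_cases h : ∃ n, IProto.outPos σ n = true ∧ IProto.outCnt σ n = k
      · have h' : ∃ n, IProto.outPos (fun n => (g n).1) n = true ∧
            IProto.outCnt (fun n => (g n).1) n = k := by
          obtain ⟨n, hn⟩ := h; exact ⟨n, (hpred n).mpr hn⟩
        rw [dif_pos h', dif_pos h, myFindCongr hpred h' h, hov]
      · have h' : ¬ ∃ n, IProto.outPos (fun n => (g n).1) n = true ∧
            IProto.outCnt (fun n => (g n).1) n = k := by
          intro ⟨n, hn⟩; exact h ⟨n, (hpred n).mp hn⟩
        rw [dif_neg h', dif_neg h]; rfl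
    -- run length
    have hrl : IProto.runLen (fun n => (g n).1) = IProto.runLen σ := by
      unfold IProto.runLen
      have hpred : ∀ n, (((g n).1).isFinal = true ↔ (σ n).isFinal = true) := by
        intro n; rw [(hkind n).2.1]
      by_cases h : ∃ n, (σ n).isFinal = true
      · have h' : ∃ n, ((g n).1).isFinal = true := by
          obtain ⟨n, hn⟩ := h; exact ⟨n, (hpred n).mpr hn⟩
        rw [dif_pos h', dif_pos h, myFindCongr hpred h' h]
      · have h' : ¬ ∃ n, ((g n).1).isFinal = true := by
          intro ⟨n, hn⟩; exact h ⟨n, (hpred n).mp hn⟩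
        rw [dif_neg h', dif_neg h]
    refine ⟨⟨hinit1 _ h0, ?_, ?_⟩, fun n => (hkind n).2.2.1, houtseq, hrl⟩
    · intro n; exact hF1 (σ n) ((g n).1) (σ (n + 1)) ((g n).2) (hs n)
    · funext n; rw [hinseq n, hin]
  refine ⟨χ, ω, ?_, ?_⟩
  · intro δ ε _ ⟨σ, hrun, hconv, hout⟩
    obtain ⟨σ', hrun', hint, houtseq, -⟩ := key δ σ hrun
    refine ⟨IProto.outSeq σ', ⟨σ', hrun', ?_, rfl⟩, fun k => by
      rw [houtseq k, hout]⟩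
    intro ⟨N, hN⟩
    exact hconv ⟨N, fun n hn => by rw [← hint n]; exact hN n hn⟩
  · intro δ σ _ _ hrun hconv
    obtain ⟨σ', hrun', hint, houtseq, hrl⟩ := key δ σ hrun
    refine ⟨σ', hrun', ?_, houtseq, hrl⟩
    intro ⟨N, hN⟩
    exact hconv ⟨N, fun n hn => by rw [← hint n]; exact hN n hn⟩
end
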